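/- arXiv:2112.13649 — 3 statements merged into one kernel-verified Lean document; each statement's English description precedes it below -/
import Mathlib

section
/- Sufficiency (Proposition 1): Let Π be a finite set of lotteries on prizes x_1 < ... < x_K and ≻* a strict linear order on Π. Suppose there exist reals {v_k}_{k=1}^K and {f_{l,k}} with 0 ≤ f_{l,k} ≤ 1 satisfying: ∑_{k=1}^K [f_{l,k} − f_{l,k−1} − f_{l+1,k} + f_{l+1,k−1}] v_k > 0 for l = 1,...,|Π|−1; f_{l,k} = f_{s,m} whenever the cumulative probabilities ∑_{t=1}^k p^{(l)}_t and ∑_{t=1}^m p^{(s)}_t coincide; f_{l,k} = 0 when the cumulative probability is 0; and f_{l,k} = 1 when it is 1. Then there exist u : X → ℝ and φ : [0,1] → [0,1] with φ(0) = 0, φ(1) = 1 (constructed as piecewise linear interpolations through the points (x_k, v_k) and (∑_{t=1}^k p^{(l)}_t, f_{l,k}) respectively) such that for all p, q ∈ Π, p ≻* q ⟺ U_{u,φ}(p) > U_{u,φ}(q). -/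
open Finset

attribute [local instance] Classical.propDecidable

/-- A lottery over `K` prizes: nonnegative probabilities summing to one. -/
def isLottery {K : ℕ} (p : Fin K → ℝ) : Prop :=
  (∀ k, 0 ≤ p k) ∧ ∑ k, p k = 1

/-- Cumulative probability `∑_{t=1}^m p_t` (empty sum is 0). -/
def cum {K : ℕ} (p : Fin K → ℝ) (m : ℕ) : ℝ :=
  ∑ t : Fin K, if (t : ℕ) < m then p t else 0

/-- Rank-dependent expected utility of a lottery `p`, with prizes `x`,
Bernoulli utility `u` and weighting function `φ`. -/
def RDEU {K : ℕ} (x : Fin K → ℝ) (u : ℝ → ℝ) (φ : ℝ → ℝ) (p : Fin K → ℝ) : ℝ :=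
  ∑ k : Fin K, (φ (cum p ((k : ℕ) + 1)) - φ (cum p (k : ℕ))) * u (x k)

/-- Proposition 1, sufficiency: a solution `v, f` of the system (1)
yields `u` and `φ` (interpolating through `(x k, v k)` and the cumulative points)
whose rank-dependent expected utility represents the order `P 0 ≻* ⋯ ≻* P n`. -/
theorem rdeu_sufficiency {K n : ℕ} (x : Fin K → ℝ) (hx : StrictMono x)
    (P : Fin (n + 1) → Fin K → ℝ) (hP : ∀ l, isLottery (P l))
    (v : Fin K → ℝ) (f : Fin (n + 1) → ℕ → ℝ)
    (hbound : ∀ l k, k ≤ K → 0 ≤ f l k ∧ f l k ≤ 1)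
    (hconsist : ∀ (l s : Fin (n + 1)) (k m : ℕ), k ≤ K → m ≤ K →
      cum (P l) k = cum (P s) m → f l k = f s m)
    (hzero : ∀ (l : Fin (n + 1)) (k : ℕ), k ≤ K → cum (P l) k = 0 → f l k = 0)
    (hone : ∀ (l : Fin (n + 1)) (k : ℕ), k ≤ K → cum (P l) k = 1 → f l k = 1)
    (hineq : ∀ j : Fin n,
      0 < ∑ k : Fin K,
        (f j.castSucc ((k : ℕ) + 1) - f j.castSucc (k : ℕ)
          - f j.succ ((k : ℕ) + 1) + f j.succ (k : ℕ)) * v k) :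
    ∃ u φ : ℝ → ℝ,
      φ 0 = 0 ∧ φ 1 = 1 ∧ (∀ t : ℝ, 0 ≤ t → t ≤ 1 → 0 ≤ φ t ∧ φ t ≤ 1) ∧
      (∀ k : Fin K, u (x k) = v k) ∧
      (∀ (l : Fin (n + 1)) (k : ℕ), k ≤ K → φ (cum (P l) k) = f l k) ∧
      (∀ l m : Fin (n + 1), l < m ↔ RDEU x u φ (P m) < RDEU x u φ (P l)) := by
  classical
  -- utility through (x k, v k)
  set u : ℝ → ℝ := fun t => if h : ∃ k : Fin K, x k = t then v h.choose else 0 with hu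
  have hu_spec : ∀ k : Fin K, u (x k) = v k := by
    intro k
    have h : ∃ k' : Fin K, x k' = x k := ⟨k, rfl⟩
    simp only [hu, dif_pos h]
    have := h.choose_spec
    rw [hx.injective this]
  -- weighting function through (cum (P l) k, f l k)
  set φ : ℝ → ℝ := fun t =>
    if h : ∃ ls : Fin (n + 1) × ℕ, ls.2 ≤ K ∧ cum (P ls.1) ls.2 = t
    then f h.choose.1 h.choose.2 else min 1 (max 0 t) with hφ
  have hφ_spec : ∀ (l : Fin (n + 1)) (k : ℕ), k ≤ K → φ (cum (P l) k) = f l k := by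
    intro l k hk
    have h : ∃ ls : Fin (n + 1) × ℕ, ls.2 ≤ K ∧ cum (P ls.1) ls.2 = cum (P l) k :=
      ⟨⟨l, k⟩, hk, rfl⟩
    simp only [hφ, dif_pos h]
    exact hconsist _ _ _ _ h.choose_spec.1 hk h.choose_spec.2
  have hcum0 : ∀ l, cum (P l) 0 = 0 := by
    intro l; simp [cum]
  have hcumK : ∀ l, cum (P l) K = 1 := by
    intro l
    have := (hP l).2
    simp only [cum]
    rw [← this]
    exact Finset.sum_congr rfl (fun t _ => by simp [t.isLt])
  have hφ0 : φ 0 = 0 := by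
    have h := hφ_spec 0 0 (Nat.zero_le K)
    rw [hcum0 0] at h
    rw [h]; exact hzero 0 0 (Nat.zero_le K) (hcum0 0)
  have hφ1 : φ 1 = 1 := by
    have h := hφ_spec 0 K le_rfl
    rw [hcumK 0] at h
    rw [h]; exact hone 0 K le_rfl (hcumK 0)
  have hφbd : ∀ t : ℝ, 0 ≤ t → t ≤ 1 → 0 ≤ φ t ∧ φ t ≤ 1 := by
    intro t ht0 ht1
    simp only [hφ]
    split
    · next h => exact hbound _ _ h.choose_spec.1
    · constructor
      · exact le_min zero_le_one (le_max_left 0 t)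
      · exact min_le_left _ _
  refine ⟨u, φ, hφ0, hφ1, hφbd, hu_spec, hφ_spec, ?_⟩
  have hRDEU : ∀ l, RDEU x u φ (P l) = ∑ k : Fin K, (f l ((k : ℕ) + 1) - f l (k : ℕ)) * v k := by
    intro l
    unfold RDEU
    refine Finset.sum_congr rfl (fun k _ => ?_)
    rw [hu_spec, hφ_spec l _ k.isLt, hφ_spec l _ (le_of_lt k.isLt)]
  have hanti : StrictAnti (fun l => RDEU x u φ (P l)) := by
    rw [Fin.strictAnti_iff_succ_lt]
    intro j
    have h := hineq j
    have heq : ∑ k : Fin K,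
        (f j.castSucc ((k : ℕ) + 1) - f j.castSucc (k : ℕ)
          - f j.succ ((k : ℕ) + 1) + f j.succ (k : ℕ)) * v k
        = RDEU x u φ (P j.castSucc) - RDEU x u φ (P j.succ) := by
      rw [hRDEU, hRDEU, ← Finset.sum_sub_distrib]
      exact Finset.sum_congr rfl (fun k _ => by ring)
    rw [heq] at h
    linarith
  intro l m
  exact ⟨fun h => hanti h, fun h => by
    by_contra hlm
    rcases lt_or_eq_of_le (not_lt.mp hlm) with h' | h'
    · exact absurd (hanti h') (not_lt.mpr h.le)
    · rw [h'] at h; exact lt_irrefl _ h⟩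
end

section
/- Counterexample to Gul–Pesendorfer axioms on limited datasets: Let p, q, r be lotteries, α ∈ (0,1), and p' = α p + (1−α) r. Suppose a stochastic choice dataset on the three menus {p,q}, {p',q}, {p',p} satisfies ρ_{{p,q}}(p) = 1, ρ_{{p',p}}(p') > 0, and ρ_{{p',q}}(p') = 0. Then ρ does not admit a random expected utility representation: there is no probability measure μ over expected-utility linear orders (orders represented by p ↦ ∑_k p_k v_k for some v ∈ ℝ^K) such that ρ_A(a) = ∑_≻ μ(≻) 1{a ≻ b for all b ∈ A, b ≠ a} for all three menus. -/
open Finset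

attribute [local instance] Classical.propDecidable

/-- counterexample to Gul–Pesendorfer on a limited dataset: if
`ρ_{p,q}(p) = 1`, `ρ_{p',p}(p') > 0` and `ρ_{p',q}(p') = 0` with
`p' = αp + (1-α)r`, `α ∈ (0,1)`, then `ρ` admits no random expected utility
representation (a finite mixture of tie-free expected-utility orders). -/
theorem no_reu_representation_counterexample {K : ℕ}
    (p q r : Fin K → ℝ) (hp : isLottery p) (hq : isLottery q) (hr : isLottery r)
    (α : ℝ) (hα0 : 0 < α) (hα1 : α < 1)
    (p' : Fin K → ℝ) (hp' : p' = fun k => α * p k + (1 - α) * r k) :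
    ¬ ∃ (N : ℕ) (w : Fin N → ℝ) (V : Fin N → Fin K → ℝ),
      (∀ i, 0 ≤ w i) ∧ (∑ i, w i = 1) ∧
      (∀ i, (∑ k, V i k * p k ≠ ∑ k, V i k * q k) ∧
            (∑ k, V i k * p' k ≠ ∑ k, V i k * p k) ∧
            (∑ k, V i k * p' k ≠ ∑ k, V i k * q k)) ∧
      (∑ i, w i * (if ∑ k, V i k * q k < ∑ k, V i k * p k then 1 else 0) = 1) ∧
      (0 < ∑ i, w i * (if ∑ k, V i k * p k < ∑ k, V i k * p' k then 1 else 0)) ∧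
      (∑ i, w i * (if ∑ k, V i k * q k < ∑ k, V i k * p' k then 1 else 0) = 0) := by
  rintro ⟨N, w, V, hw0, hw1, hties, h1, h2, h3⟩
  -- get an index i with w i > 0 and V i · p < V i · p'
  obtain ⟨i, hi⟩ : ∃ i, 0 < w i *
      (if ∑ k, V i k * p k < ∑ k, V i k * p' k then 1 else 0) := by
    by_contra h
    push_neg at h
    have : ∑ i, w i * (if ∑ k, V i k * p k < ∑ k, V i k * p' k then 1 else 0) ≤ 0 :=
      Finset.sum_nonpos fun i _ => h i
    linarith
  have hwi : 0 < w i := by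
    by_contra h
    push_neg at h
    have : w i * (if ∑ k, V i k * p k < ∑ k, V i k * p' k then 1 else 0) ≤ 0 := by
      apply mul_nonpos_of_nonpos_of_nonneg h
      split <;> norm_num
    linarith
  have hpp' : ∑ k, V i k * p k < ∑ k, V i k * p' k := by
    by_contra h
    rw [if_neg h, mul_zero] at hi
    exact lt_irrefl 0 hi
  -- from h3: term at i is zero, so ¬ (q < p'), with tie-freeness gives p' < q
  have h3i : w i * (if ∑ k, V i k * q k < ∑ k, V i k * p' k then 1 else 0) = 0 := by
    have hnn : ∀ j ∈ Finset.univ, 0 ≤ w j *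
        (if ∑ k, V j k * q k < ∑ k, V j k * p' k then 1 else 0) := by
      intro j _
      apply mul_nonneg (hw0 j)
      split <;> norm_num
    exact (Finset.sum_eq_zero_iff_of_nonneg hnn).mp h3 i (Finset.mem_univ i)
  have hp'q : ∑ k, V i k * p' k < ∑ k, V i k * q k := by
    rcases lt_trichotomy (∑ k, V i k * p' k) (∑ k, V i k * q k) with h | h | h
    · exact h
    · exact absurd h (hties i).2.2
    · rw [if_pos h, mul_one] at h3i
      exact absurd h3i (ne_of_gt hwi)
  -- from h1: term at i must be w i, so q < p
  have hqp : ∑ k, V i k * q k < ∑ k, V i k * p k := by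
    by_contra h
    have key : ∑ j, w j * ((if ∑ k, V j k * q k < ∑ k, V j k * p k then 1 else 0)) <
        ∑ j, w j := by
      apply Finset.sum_lt_sum
      · intro j _
        have : (if ∑ k, V j k * q k < ∑ k, V j k * p k then (1:ℝ) else 0) ≤ 1 := by
          split <;> norm_num
        nlinarith [hw0 j]
      · exact ⟨i, Finset.mem_univ i, by rw [if_neg h, mul_zero]; exact hwi⟩
    rw [h1, hw1] at key
    exact lt_irrefl 1 key
  linarith
end

section
/- Rank-dependent expected utility respects first-order stochastic dominance under monotone primitives: if u : X → ℝ is strictly increasing on x_1 < ... < x_K and φ : [0,1] → [0,1] is strictly increasing with φ(0)=0, φ(1)=1, and lottery p strictly first-order stochastically dominates q (i.e., ∑_{t=1}^k p_t ≤ ∑_{t=1}^k q_t for all k = 1,...,K−1 with strict inequality for some k), then U_{u,φ}(p) > U_{u,φ}(q). -/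
open Finset

attribute [local instance] Classical.propDecidable

/-- rank-dependent expected utility respects strict first-order
stochastic dominance when `u` is strictly increasing on the prizes and `φ` is
strictly increasing on `[0,1]` with `φ 0 = 0`, `φ 1 = 1`. -/
theorem rdeu_respects_fosd {K : ℕ} (x : Fin K → ℝ) (hx : StrictMono x)
    (u φ : ℝ → ℝ) (hu : ∀ i j : Fin K, i < j → u (x i) < u (x j))
    (hφmono : StrictMonoOn φ (Set.Icc 0 1)) (hφ0 : φ 0 = 0) (hφ1 : φ 1 = 1)
    (p q : Fin K → ℝ) (hp : isLottery p) (hq : isLottery q)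
    (hdom : ∀ k : ℕ, k ≤ K → cum p k ≤ cum q k)
    (hstrict : ∃ k : ℕ, 1 ≤ k ∧ k < K ∧ cum p k < cum q k) :
    RDEU x u φ q < RDEU x u φ p := by
  classical
  obtain ⟨hp0, hp1⟩ := hp
  obtain ⟨hq0, hq1⟩ := hq
  -- basic facts about `cum`
  have cum0 : ∀ r : Fin K → ℝ, cum r 0 = 0 := by
    intro r; simp [cum]
  have cumK : ∀ r : Fin K → ℝ, (∑ k, r k = 1) → cum r K = 1 := by
    intro r hs
    rw [cum, ← hs]
    apply Finset.sum_congr rfl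
    intro t _
    simp [t.isLt]
  have cum_nonneg : ∀ (r : Fin K → ℝ), (∀ k, 0 ≤ r k) → ∀ m, 0 ≤ cum r m := by
    intro r hr m
    apply Finset.sum_nonneg
    intro t _
    split
    · exact hr t
    · exact le_rfl
  have cum_le_one : ∀ (r : Fin K → ℝ), (∀ k, 0 ≤ r k) → (∑ k, r k = 1) →
      ∀ m, cum r m ≤ 1 := by
    intro r hr hs m
    rw [← hs]
    apply Finset.sum_le_sum
    intro t _
    split
    · exact le_rfl
    · exact hr t
  have cum_mem : ∀ (r : Fin K → ℝ), (∀ k, 0 ≤ r k) → (∑ k, r k = 1) →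
      ∀ m, cum r m ∈ Set.Icc (0:ℝ) 1 := fun r hr hs m =>
    ⟨cum_nonneg r hr m, cum_le_one r hr hs m⟩
  -- the difference function and the utility sequence
  set D : ℕ → ℝ := fun k => φ (cum q k) - φ (cum p k) with hD
  set g : ℕ → ℝ := fun k => if h : k < K then u (x ⟨k, h⟩) else 0 with hg
  have hD0 : D 0 = 0 := by simp [hD, cum0]
  have hDK : D K = 0 := by simp [hD, cumK p hp1, cumK q hq1]
  have hDnonneg : ∀ k : ℕ, k ≤ K → 0 ≤ D k := by
    intro k hk
    have := (hφmono.monotoneOn) (cum_mem p hp0 hp1 k) (cum_mem q hq0 hq1 k) (hdom k hk)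
    simpa [hD] using sub_nonneg.mpr this
  -- rewrite RDEU as a sum over `range K`
  have hR : ∀ r : Fin K → ℝ, RDEU x u φ r =
      ∑ k ∈ Finset.range K, (φ (cum r (k+1)) - φ (cum r k)) * g k := by
    intro r
    rw [RDEU, ← Fin.sum_univ_eq_sum_range (fun k => (φ (cum r (k+1)) - φ (cum r k)) * g k) K]
    apply Finset.sum_congr rfl
    intro k _
    simp [hg, k.isLt]
  have key : RDEU x u φ p - RDEU x u φ q =
      ∑ k ∈ Finset.range K, (D k - D (k+1)) * g k := by
    rw [hR p, hR q, ← Finset.sum_sub_distrib]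
    apply Finset.sum_congr rfl
    intro k _
    simp only [hD]
    ring
  -- Abel-type shift
  have shift : ∑ k ∈ Finset.range K, D (k+1) * g k =
      ∑ k ∈ Finset.range K, D k * g (k-1) := by
    have h1 := Finset.sum_range_succ' (fun k => D k * g (k-1)) K
    have h2 := Finset.sum_range_succ (fun k => D k * g (k-1)) K
    simp only [Nat.add_sub_cancel] at h1
    rw [h2] at h1
    rw [hD0] at h1
    rw [hDK] at h1
    linarith [h1]
  have key2 : RDEU x u φ p - RDEU x u φ q =
      ∑ k ∈ Finset.range K, D k * (g k - g (k-1)) := by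
    rw [key]
    have : ∀ k ∈ Finset.range K, (D k - D (k+1)) * g k
        = D k * g k - D (k+1) * g k := by intro k _; ring
    rw [Finset.sum_congr rfl this, Finset.sum_sub_distrib, shift,
      ← Finset.sum_sub_distrib]
    apply Finset.sum_congr rfl
    intro k _
    ring
  -- positivity of each term
  have gpos : ∀ j : ℕ, j + 1 < K → 0 < g (j+1) - g ((j+1)-1) := by
    intro j hj
    have hj' : j < K := Nat.lt_of_succ_lt hj
    have := hu ⟨j, hj'⟩ ⟨j+1, hj⟩ (by simp)
    simp only [hg, Nat.add_sub_cancel, hj, hj', dif_pos]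
    linarith
  have pos : 0 < ∑ k ∈ Finset.range K, D k * (g k - g (k-1)) := by
    apply Finset.sum_pos'
    · intro k hk
      rcases Nat.eq_zero_or_pos k with rfl | hk1
      · simp [hD0]
      · obtain ⟨j, rfl⟩ := Nat.exists_eq_add_of_le hk1
        rw [Nat.add_comm] at *
        have hjK : j + 1 < K := Finset.mem_range.mp hk
        exact mul_nonneg (hDnonneg _ (le_of_lt hjK)) (le_of_lt (gpos j hjK))
    · obtain ⟨k₀, hk1, hkK, hlt⟩ := hstrict
      refine ⟨k₀, Finset.mem_range.mpr hkK, ?_⟩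
      obtain ⟨j, rfl⟩ := Nat.exists_eq_add_of_le hk1
      rw [Nat.add_comm] at *
      have hDpos : 0 < D (j+1) := by
        have := hφmono (cum_mem p hp0 hp1 (j+1)) (cum_mem q hq0 hq1 (j+1)) hlt
        simpa [hD] using sub_pos.mpr this
      exact mul_pos hDpos (gpos j hkK)
  linarith [key2, pos]
end
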